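/- Let n, d be positive integers and ε a real number with 0 < ε ≤ n. There exist a nonnegative integer σ ≤ ⌈n·log₂(e·2^d·(d+1)^d·n^{d−1}/ε^d + e − e/n)⌉ and a σ-bit training/inference pair (ρ, f̂) for datasets in [0,1]^{n×d} with query domain Q_c such that for every dataset D ∈ [0,1]^{n×d}, ∫_{Q_c} |f̂(ρ(D))(q) − c_D(q)| dq ≤ ε. -/

import Mathlib

/-!
Round every coordinate of the dataset down to the grid `(1/m)ℤ`, with `m ≈ 2(d+1)n/ε`. The
model stores only the multiset of rounded points; there are
`C(m^d + n - 1, n) ≤ (e (m^d + n - 1)/n)^n` such multisets, which gives the bit budget. Moving a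
point by less than `1/m` in every coordinate changes the answer to a query only if one of its
`2d` faces `c_j` or `c_j + r_j` lies in a gap of length `1/m`, an event of volume at most `1/m`
in `Q_c`. Hence the `L¹` error is at most `2dn/m ≤ ε`.
-/

open MeasureTheory

/-- The query domain `Q_c` for `d`-dimensional range queries: a query is a pair `(c, r)`
with `r_j ∈ [0,1]` and `c_j ∈ [−r_j, 1−r_j]` for all `j`. -/
def Qc (d : ℕ) : Set ((Fin d → ℝ) × (Fin d → ℝ)) :=
  {q | ∀ j, q.2 j ∈ Set.Icc (0 : ℝ) 1 ∧ q.1 j ∈ Set.Icc (-(q.2 j)) (1 - q.2 j)}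

/-- The cardinality function of a `d`-dimensional dataset:
`c_D(q) = Σ_i 1[c_j ≤ D_{i,j} ≤ c_j + r_j for all j]`. -/
noncomputable def cardF {n d : ℕ} (D : Fin n → Fin d → ℝ)
    (q : (Fin d → ℝ) × (Fin d → ℝ)) : ℝ :=
  ∑ i, if ∀ j, q.1 j ≤ D i j ∧ D i j ≤ q.1 j + q.2 j then 1 else 0

open Set

namespace Nat

theorem choose_le_exp_mul_div_pow (N k : ℕ) :
    (N.choose k : ℝ) ≤ (Real.exp 1 * N / k) ^ k := by
  rcases k.eq_zero_or_pos with rfl | hk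
  · simp
  have hk' : (0 : ℝ) < k := by exact_mod_cast hk
  have hexp : (k : ℝ) ^ k / k ! ≤ Real.exp 1 ^ k := by
    rw [← Real.exp_nat_mul, mul_one]; exact Real.pow_div_factorial_le_exp _ hk'.le k
  calc (N.choose k : ℝ) ≤ (N : ℝ) ^ k / k ! := Nat.choose_le_pow_div k N
    _ = ((k : ℝ) ^ k / k !) * (N / k) ^ k := by rw [div_pow]; field_simp
    _ ≤ Real.exp 1 ^ k * (N / k) ^ k := by gcongr
    _ = (Real.exp 1 * N / k) ^ k := by rw [← mul_pow, mul_div_assoc]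

end Nat

theorem Sym.card_le_exp_mul_div_pow (α : Type*) [Fintype α] [DecidableEq α] (k : ℕ) :
    (Fintype.card (Sym α k) : ℝ) ≤
      (Real.exp 1 * ((Fintype.card α + k - 1 : ℕ) : ℝ) / k) ^ k := by
  rw [Sym.card_sym_eq_choose]
  exact Nat.choose_le_exp_mul_div_pow _ _

theorem exists_leftInverse_of_card_le_two_pow (α : Type*) [Fintype α] [Nonempty α] {σ : ℕ}
    (h : Fintype.card α ≤ 2 ^ σ) :
    ∃ (enc : α → Fin σ → Bool) (dec : (Fin σ → Bool) → α),
      Function.LeftInverse dec enc := by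
  obtain ⟨enc⟩ :=
    Function.Embedding.nonempty_of_card_le (β := Fin σ → Bool) (by simpa using h)
  exact ⟨enc, Function.invFun enc, Function.leftInverse_invFun enc.injective⟩

theorem Nat.le_two_pow_ceil_of_le_two_rpow {N : ℕ} {y : ℝ} (h : (N : ℝ) ≤ 2 ^ y) :
    N ≤ 2 ^ ⌈y⌉₊ := by
  have : (2 : ℝ) ^ y ≤ 2 ^ (⌈y⌉₊ : ℝ) :=
    Real.rpow_le_rpow_of_exponent_le one_le_two (Nat.le_ceil y)
  exact_mod_cast h.trans (this.trans_eq (Real.rpow_natCast 2 _))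

theorem Real.pow_eq_two_rpow_mul_logb {A : ℝ} (hA : 0 < A) (n : ℕ) :
    A ^ n = (2 : ℝ) ^ (n * Real.logb 2 A) := by
  rw [mul_comm, Real.rpow_mul zero_le_two, Real.rpow_logb two_pos (by norm_num) hA,
    Real.rpow_natCast]

section RangeQueries

variable {d : ℕ}

noncomputable def boxIndicator (x : Fin d → ℝ) (q : (Fin d → ℝ) × (Fin d → ℝ)) : ℝ :=
  if ∀ j, q.1 j ≤ x j ∧ x j ≤ q.1 j + q.2 j then 1 else 0

theorem cardF_eq_sum_boxIndicator {n : ℕ} (D : Fin n → Fin d → ℝ)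
    (q : (Fin d → ℝ) × (Fin d → ℝ)) :
    cardF D q = ∑ i, boxIndicator (D i) q :=
  rfl

theorem measurable_boxIndicator (x : Fin d → ℝ) : Measurable (boxIndicator x) := by
  refine Measurable.ite ?_ measurable_const measurable_const
  measurability

/-- `slab j 0 a b` (resp. `slab j 1 a b`): the lower face `c_j` (resp. the upper face
`c_j + r_j`) of the query lies in `[a, b]`. -/
def slab (j : Fin d) (c a b : ℝ) : Set ((Fin d → ℝ) × (Fin d → ℝ)) :=
  {q | q.1 j + c * q.2 j ∈ Icc a b}

theorem measurableSet_slab (j : Fin d) (c a b : ℝ) : MeasurableSet (slab j c a b) := by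
  unfold slab
  measurability

theorem measurableSet_Qc : MeasurableSet (Qc d) := by
  unfold Qc
  measurability

/- Fubini: for `r ∈ [0,1]^d` the slice in `c` lies in a box with side `[a - c r_j, b - c r_j]`
in direction `j` and sides `[-r_j', 1 - r_j']` of length `1` in the others. -/
theorem volume_Qc_inter_slab_le (j : Fin d) (c a b : ℝ) :
    volume (Qc d ∩ slab j c a b) ≤ ENNReal.ofReal (b - a) := by
  set cube : Set (Fin d → ℝ) := univ.pi fun _ => Icc 0 1
  have hslice : ∀ r, volume ((fun x => (x, r)) ⁻¹' (Qc d ∩ slab j c a b)) ≤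
      cube.indicator (fun _ => ENNReal.ofReal (b - a)) r := by
    intro r
    by_cases hr : r ∈ cube
    · rw [indicator_of_mem hr]
      calc _ ≤ volume (univ.pi (Function.update (fun j' => Icc (-r j') (1 - r j')) j
              (Icc (a - c * r j) (b - c * r j)))) := measure_mono ?_
        _ = ENNReal.ofReal (b - a) := by
          rw [volume_pi_pi, Finset.prod_eq_single_of_mem j (Finset.mem_univ j)
            fun j' _ hj => by simp [hj, Real.volume_Icc]]
          simp [Real.volume_Icc]
      rintro x ⟨hQ, hS⟩ j' -
      rcases eq_or_ne j' j with rfl | hj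
      · simp only [slab, mem_ofPred_eq, mem_Icc] at hS
        simp only [Function.update_self, mem_Icc]
        constructor <;> linarith
      · simpa [hj] using (hQ j').2
    · rw [indicator_of_notMem hr, nonpos_iff_eq_zero, measure_eq_zero_iff_ae_notMem]
      refine Filter.Eventually.of_forall fun x hx => hr fun j' _ => ?_
      exact (hx.1 j').1
  rw [Measure.volume_eq_prod,
    Measure.prod_apply_symm (measurableSet_Qc.inter (measurableSet_slab ..))]
  calc _ ≤ ∫⁻ r, cube.indicator (fun _ => ENNReal.ofReal (b - a)) r := lintegral_mono hslice
    _ = ENNReal.ofReal (b - a) * volume cube :=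
      lintegral_indicator_const (MeasurableSet.univ_pi fun _ => measurableSet_Icc) _
    _ = ENNReal.ofReal (b - a) := by simp [cube, Real.volume_Icc_pi]

theorem setOf_boxIndicator_ne_subset {x' x : Fin d → ℝ} (hx : x' ≤ x) :
    {q | boxIndicator x' q ≠ boxIndicator x q} ⊆
      ⋃ j, slab j 0 (x' j) (x j) ∪ slab j 1 (x' j) (x j) := by
  intro q hq
  simp only [mem_iUnion, mem_union, slab, mem_ofPred_eq, mem_Icc, zero_mul, add_zero, one_mul]
  by_cases hx'q : ∀ j, q.1 j ≤ x' j ∧ x' j ≤ q.1 j + q.2 j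
  · have hxq : ¬ ∀ j, q.1 j ≤ x j ∧ x j ≤ q.1 j + q.2 j := fun hxq =>
      hq (by simp only [boxIndicator, hx'q, hxq])
    push Not at hxq
    obtain ⟨j, hj⟩ := hxq
    exact ⟨j, .inr ⟨(hx'q j).2, (hj ((hx'q j).1.trans (hx j))).le⟩⟩
  · have hxq : ∀ j, q.1 j ≤ x j ∧ x j ≤ q.1 j + q.2 j := by
      by_contra hxq
      exact hq (by simp only [boxIndicator, hx'q, hxq])
    push Not at hx'q
    obtain ⟨j, hj⟩ := hx'q
    refine ⟨j, .inl ⟨not_lt.mp fun hlt => ?_, (hxq j).1⟩⟩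
    linarith [hj hlt.le, hx j, (hxq j).2]

theorem lintegral_Qc_abs_boxIndicator_sub_le {x' x : Fin d → ℝ} {δ : ℝ} (hx : x' ≤ x)
    (hδ : ∀ j, x j ≤ x' j + δ) :
    ∫⁻ q in Qc d, ENNReal.ofReal |boxIndicator x' q - boxIndicator x q| ≤
      ENNReal.ofReal (2 * d * δ) := by
  set T := ⋃ j, slab j 0 (x' j) (x j) ∪ slab j 1 (x' j) (x j)
  have hpoint :
      ∀ q, ENNReal.ofReal |boxIndicator x' q - boxIndicator x q| ≤ T.indicator 1 q := by
    intro q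
    by_cases hq : q ∈ T
    · rw [indicator_of_mem hq, Pi.one_apply, ENNReal.ofReal_le_one]
      unfold boxIndicator
      split_ifs <;> norm_num
    · have : boxIndicator x' q = boxIndicator x q :=
        not_not.mp fun hne => hq (setOf_boxIndicator_ne_subset hx hne)
      simp [this]
  have hslab : ∀ j c, volume.restrict (Qc d) (slab j c (x' j) (x j)) ≤ ENNReal.ofReal δ := by
    intro j c
    rw [Measure.restrict_apply (measurableSet_slab ..), inter_comm]
    exact (volume_Qc_inter_slab_le j c _ _).trans
      (ENNReal.ofReal_le_ofReal (by linarith [hδ j]))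
  calc _ ≤ ∫⁻ q in Qc d, T.indicator 1 q := lintegral_mono hpoint
    _ ≤ volume.restrict (Qc d) T := lintegral_indicator_one_le T
    _ ≤ ∑ j, (volume.restrict (Qc d) (slab j 0 (x' j) (x j)) +
          volume.restrict (Qc d) (slab j 1 (x' j) (x j))) :=
      (measure_iUnion_fintype_le _ _).trans (Finset.sum_le_sum fun j _ => measure_union_le _ _)
    _ ≤ ∑ _j : Fin d, (ENNReal.ofReal δ + ENNReal.ofReal δ) :=
      Finset.sum_le_sum fun j _ => add_le_add (hslab j 0) (hslab j 1)
    _ = ENNReal.ofReal (2 * d * δ) := by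
      rw [ENNReal.ofReal_mul (by positivity), ENNReal.ofReal_mul zero_le_two]
      simp [two_mul, add_mul]

theorem lintegral_Qc_abs_cardF_sub_le {n : ℕ} {D' D : Fin n → Fin d → ℝ} {δ : ℝ}
    (hD : ∀ i, D' i ≤ D i) (hδ : ∀ i j, D i j ≤ D' i j + δ) :
    ∫⁻ q in Qc d, ENNReal.ofReal |cardF D' q - cardF D q| ≤
      ENNReal.ofReal (n * (2 * d * δ)) := by
  have hpoint : ∀ q, ENNReal.ofReal |cardF D' q - cardF D q| ≤
      ∑ i, ENNReal.ofReal |boxIndicator (D' i) q - boxIndicator (D i) q| := by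
    intro q
    rw [← ENNReal.ofReal_sum_of_nonneg fun i _ => abs_nonneg _]
    refine ENNReal.ofReal_le_ofReal ?_
    rw [cardF_eq_sum_boxIndicator, cardF_eq_sum_boxIndicator, ← Finset.sum_sub_distrib]
    exact Finset.abs_sum_le_sum_abs _ _
  calc _ ≤ ∫⁻ q in Qc d,
          ∑ i, ENNReal.ofReal |boxIndicator (D' i) q - boxIndicator (D i) q| :=
        lintegral_mono hpoint
    _ = ∑ i, ∫⁻ q in Qc d, ENNReal.ofReal |boxIndicator (D' i) q - boxIndicator (D i) q| :=
        lintegral_finsetSum _ fun i _ =>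
          ((measurable_boxIndicator _).sub (measurable_boxIndicator _)).abs.ennreal_ofReal
    _ ≤ ∑ _i : Fin n, ENNReal.ofReal (2 * d * δ) :=
        Finset.sum_le_sum fun i _ => lintegral_Qc_abs_boxIndicator_sub_le (hD i) (hδ i)
    _ = ENNReal.ofReal (n * (2 * d * δ)) := by
      rw [ENNReal.ofReal_mul (by positivity)]
      simp

end RangeQueries

section Quantization

variable (m : ℕ) [NeZero m]

-- `⌊x m⌋` clamped into `Fin m`, so that `x = 1` lands in the last cell.
noncomputable def gridIndex (x : ℝ) : Fin m :=
  ⟨min ⌊x * m⌋₊ (m - 1), (min_le_right _ _).trans_lt (Nat.sub_one_lt (NeZero.ne m))⟩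

noncomputable def roundDown (x : ℝ) : ℝ := (gridIndex m x : ℕ) / m

variable {m}

theorem roundDown_le {x : ℝ} (hx : 0 ≤ x) : roundDown m x ≤ x := by
  have hm : (0 : ℝ) < m := by exact_mod_cast NeZero.pos m
  rw [roundDown, div_le_iff₀ hm]
  calc ((gridIndex m x : ℕ) : ℝ) ≤ ⌊x * m⌋₊ := by exact_mod_cast min_le_left _ _
    _ ≤ x * m := Nat.floor_le (by positivity)

theorem le_roundDown_add {x : ℝ} (hx : x ≤ 1) : x ≤ roundDown m x + 1 / m := by
  have hm : (0 : ℝ) < m := by exact_mod_cast NeZero.pos m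
  rw [roundDown, ← add_div, le_div_iff₀ hm]
  change x * m ≤ ((min ⌊x * m⌋₊ (m - 1) : ℕ) : ℝ) + 1
  rcases le_total ⌊x * m⌋₊ (m - 1) with h | h
  · rw [min_eq_left h]
    exact (Nat.lt_floor_add_one _).le
  · rw [min_eq_right h, Nat.cast_sub (NeZero.one_le), Nat.cast_one, sub_add_cancel]
    nlinarith

variable (m)

noncomputable def quantize {n d : ℕ} (D : Fin n → Fin d → ℝ) : Sym (Fin d → Fin m) n :=
  ⟨Finset.univ.val.map fun i j => gridIndex m (D i j), by simp⟩

noncomputable def gridCardF {n d : ℕ} (s : Sym (Fin d → Fin m) n)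
    (q : (Fin d → ℝ) × (Fin d → ℝ)) : ℝ :=
  (s.1.map fun v => boxIndicator (fun j => (v j : ℕ) / m) q).sum

theorem gridCardF_quantize {n d : ℕ} (D : Fin n → Fin d → ℝ) :
    gridCardF m (quantize m D) = cardF fun i j => roundDown m (D i j) := by
  ext q
  simp only [gridCardF, quantize, Multiset.map_map, cardF_eq_sum_boxIndicator]
  rfl

end Quantization

section ModelSize

variable {n d m : ℕ} {ε : ℝ}

noncomputable def modelSizeBase (n d : ℕ) (ε : ℝ) : ℝ :=
  Real.exp 1 * 2 ^ d * ((d : ℝ) + 1) ^ d * (n : ℝ) ^ (d - 1) / ε ^ d + Real.exp 1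
    - Real.exp 1 / n

theorem exists_gridSize (hε : 0 < ε) (hεn : ε ≤ n) :
    ∃ m : ℕ, 0 < m ∧ (m : ℝ) ≤ 2 * (d + 1) * n / ε ∧ n * (2 * d * (1 / m)) ≤ ε := by
  have hK : 2 ≤ 2 * ((d : ℝ) + 1) * n / ε := by
    rw [le_div_iff₀ hε]
    nlinarith [(Nat.cast_nonneg d : (0 : ℝ) ≤ d)]
  refine ⟨⌊2 * ((d : ℝ) + 1) * n / ε⌋₊, Nat.floor_pos.mpr (by linarith),
    Nat.floor_le (by linarith), ?_⟩
  have hlt := Nat.lt_floor_add_one (2 * ((d : ℝ) + 1) * n / ε)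
  set m := ⌊2 * ((d : ℝ) + 1) * n / ε⌋₊
  have hm : (0 : ℝ) < m := by exact_mod_cast Nat.floor_pos.mpr (by linarith)
  rw [div_lt_iff₀ hε] at hlt
  rw [show (n : ℝ) * (2 * d * (1 / m)) = 2 * d * n / m by ring, div_le_iff₀ hm]
  nlinarith

theorem exp_one_le_exp_mul_div (hn : 0 < n) (hm : 0 < m) :
    Real.exp 1 ≤ Real.exp 1 * ((m ^ d + n - 1 : ℕ) : ℝ) / n := by
  have hN : (n : ℝ) ≤ ((m ^ d + n - 1 : ℕ) : ℝ) := by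
    have := Nat.one_le_pow d m hm
    exact_mod_cast (by omega : n ≤ m ^ d + n - 1)
  rw [le_div_iff₀ (by exact_mod_cast hn)]
  exact mul_le_mul_of_nonneg_left hN (Real.exp_pos 1).le

theorem exp_mul_div_le_modelSizeBase (hn : 0 < n) (hε : 0 < ε)
    (hm : (m : ℝ) ≤ 2 * (d + 1) * n / ε) :
    Real.exp 1 * ((m ^ d + n - 1 : ℕ) : ℝ) / n ≤ modelSizeBase n d ε := by
  have hnR : (0 : ℝ) < n := by exact_mod_cast hn
  have hcast : ((m ^ d + n - 1 : ℕ) : ℝ) = (m : ℝ) ^ d + n - 1 := by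
    rw [Nat.cast_sub (by omega)]
    push_cast
    ring
  have hnd : (n : ℝ) ^ d / n ≤ (n : ℝ) ^ (d - 1) := by
    rw [div_le_iff₀ hnR, ← pow_succ]
    exact pow_le_pow_right₀ (by exact_mod_cast hn) (by omega)
  have hpow : (m : ℝ) ^ d / n ≤ 2 ^ d * ((d : ℝ) + 1) ^ d * n ^ (d - 1) / ε ^ d :=
    calc (m : ℝ) ^ d / n ≤ (2 * (d + 1) * n / ε) ^ d / n := by gcongr
      _ = 2 ^ d * ((d : ℝ) + 1) ^ d * ((n : ℝ) ^ d / n) / ε ^ d := by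
        rw [div_pow, mul_pow, mul_pow]
        ring
      _ ≤ 2 ^ d * ((d : ℝ) + 1) ^ d * n ^ (d - 1) / ε ^ d := by gcongr
  calc Real.exp 1 * ((m ^ d + n - 1 : ℕ) : ℝ) / n
      = Real.exp 1 * ((m : ℝ) ^ d / n) + Real.exp 1 - Real.exp 1 / n := by
        rw [hcast]
        field_simp
    _ ≤ Real.exp 1 * (2 ^ d * ((d : ℝ) + 1) ^ d * n ^ (d - 1) / ε ^ d) + Real.exp 1
        - Real.exp 1 / n := by gcongr
    _ = modelSizeBase n d ε := by
        rw [modelSizeBase]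
        ring

end ModelSize

theorem stmt_7_general (n d : ℕ)
    (ε : ℝ) (hε1 : 0 < ε) (hε2 : ε ≤ (n : ℝ)) :
    ∃ σ : ℕ, (σ : ℤ) ≤
      ⌈(n : ℝ) * Real.logb 2 (Real.exp 1 * 2 ^ d * ((d : ℝ) + 1) ^ d * (n : ℝ) ^ (d - 1) / ε ^ d
        + Real.exp 1 - Real.exp 1 / (n : ℝ))⌉ ∧
    ∃ (ρ : (Fin n → Fin d → ℝ) → (Fin σ → Bool))
      (fhat : (Fin σ → Bool) → (((Fin d → ℝ) × (Fin d → ℝ)) → ℝ)),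
      ∀ D : Fin n → Fin d → ℝ, (∀ i j, D i j ∈ Set.Icc (0 : ℝ) 1) →
        ∫⁻ q in Qc d, ENNReal.ofReal |fhat (ρ D) q - cardF D q| ≤
          ENNReal.ofReal ε := by
  have hn : 0 < n := by exact_mod_cast hε1.trans_le hε2
  obtain ⟨m, hm0, hmK, herr⟩ := exists_gridSize (d := d) hε1 hε2
  have : NeZero m := ⟨hm0.ne'⟩
  have hB := exp_mul_div_le_modelSizeBase hn hε1 hmK
  have hA : 1 ≤ modelSizeBase n d ε :=
    (Real.one_le_exp zero_le_one).trans ((exp_one_le_exp_mul_div hn hm0).trans hB)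
  set y := n * Real.logb 2 (modelSizeBase n d ε)
  have hy : 0 ≤ y := mul_nonneg n.cast_nonneg (Real.logb_nonneg one_lt_two hA)
  have hcard : (Fintype.card (Sym (Fin d → Fin m) n) : ℝ) ≤ 2 ^ y := by
    rw [← Real.pow_eq_two_rpow_mul_logb (by linarith)]
    calc _ ≤ (Real.exp 1 * ((m ^ d + n - 1 : ℕ) : ℝ) / n) ^ n := by
          simpa using Sym.card_le_exp_mul_div_pow (Fin d → Fin m) n
      _ ≤ _ := pow_le_pow_left₀ (by positivity) hB n
  obtain ⟨enc, dec, hdec⟩ :=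
    exists_leftInverse_of_card_le_two_pow _ (Nat.le_two_pow_ceil_of_le_two_rpow hcard)
  refine ⟨⌈y⌉₊, (Int.natCast_ceil_eq_ceil hy).le, fun D => enc (quantize m D),
    fun b => gridCardF m (dec b), fun D hD => ?_⟩
  simp only [hdec _, gridCardF_quantize]
  calc _ ≤ ENNReal.ofReal (n * (2 * d * (1 / m))) :=
        lintegral_Qc_abs_cardF_sub_le (fun i j => roundDown_le (hD i j).1)
          fun i j => le_roundDown_add (hD i j).2
    _ ≤ ENNReal.ofReal ε := ENNReal.ofReal_le_ofReal herr

/-- upper bound on the required model size for average-case (1-norm)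
error in learned cardinality estimation. -/
theorem stmt_7 (n d : ℕ) (hn : 0 < n) (hd : 0 < d)
    (ε : ℝ) (hε1 : 0 < ε) (hε2 : ε ≤ (n : ℝ)) :
    ∃ σ : ℕ, (σ : ℤ) ≤
      ⌈(n : ℝ) * Real.logb 2 (Real.exp 1 * 2 ^ d * ((d : ℝ) + 1) ^ d * (n : ℝ) ^ (d - 1) / ε ^ d
        + Real.exp 1 - Real.exp 1 / (n : ℝ))⌉ ∧
    ∃ (ρ : (Fin n → Fin d → ℝ) → (Fin σ → Bool))
      (fhat : (Fin σ → Bool) → (((Fin d → ℝ) × (Fin d → ℝ)) → ℝ)),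
      ∀ D : Fin n → Fin d → ℝ, (∀ i j, D i j ∈ Set.Icc (0 : ℝ) 1) →
        ∫⁻ q in Qc d, ENNReal.ofReal |fhat (ρ D) q - cardF D q| ≤
          ENNReal.ofReal ε :=
  stmt_7_general n d ε hε1 hε2
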